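/- (Concentration of the componentwise median of i.i.d. random vectors.) There is an absolute constant c > 0 such that the following holds. Let g₁, …, g_t be i.i.d. random vectors in ℝ^k, and let B ≥ 0 satisfy Pr{ ‖g₁‖ ≤ B } ≥ 4/5. Then the componentwise median ḡ = median(g₁, …, g_t) satisfies Pr{ ‖ḡ‖ > 2B } ≤ exp(−c t). -/

import Mathlib

/-!
If `‖ḡ‖ > 2B`, then at most `2t/3` of the `gⱼ` lie in the ball of radius `B`: in each
coordinate at least half of the `gⱼ` dominate the median in absolute value, so a set `S` of
indices sees `(|S| - t/2) ‖ḡ‖² ≤ ∑_{j ∈ S} ‖gⱼ‖²`, and with `S` the indices in the ball this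
forces `|S| ≤ 2t/3`. Each `gⱼ` leaves the ball with probability at most `1/5`, and by Hoeffding's
inequality at least `t/3` of `t` independent such events occur with probability at most
`exp (-2 (2/15)² t)`.
-/

open MeasureTheory

/-- `m` is a median of the `t` real numbers `v 0, …, v (t-1)`:
at least `t/2` of them are `≥ m` and at least `t/2` of them are `≤ m`. -/
def IsMedian {t : ℕ} (v : Fin t → ℝ) (m : ℝ) : Prop :=
  (t : ℝ) / 2 ≤ (Finset.univ.filter fun j => m ≤ v j).card ∧
  (t : ℝ) / 2 ≤ (Finset.univ.filter fun j => v j ≤ m).card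

open Finset

namespace IsMedian

variable {t : ℕ} {v : Fin t → ℝ} {m : ℝ}

theorem exists_half_sq_le_sq (h : IsMedian v m) :
    ∃ A : Finset (Fin t), (t : ℝ) / 2 ≤ #A ∧ ∀ j ∈ A, m ^ 2 ≤ v j ^ 2 := by
  rcases le_or_gt 0 m with hm | hm
  · refine ⟨_, h.1, fun j hj => ?_⟩
    have := (mem_filter.1 hj).2
    nlinarith
  · refine ⟨_, h.2, fun j hj => ?_⟩
    have := (mem_filter.1 hj).2
    nlinarith

theorem sub_half_mul_sq_le_sum_sq (h : IsMedian v m) (S : Finset (Fin t)) :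
    (#S - t / 2 : ℝ) * m ^ 2 ≤ ∑ j ∈ S, v j ^ 2 := by
  classical
  obtain ⟨A, hA, hAm⟩ := h.exists_half_sq_le_sq
  have hinter : (#S - t / 2 : ℝ) ≤ #(A ∩ S) := by
    have hunion : (#(A ∪ S) : ℝ) ≤ t := by exact_mod_cast (card_le_univ (A ∪ S)).trans_eq (by simp)
    have hcard : (#A + #S : ℝ) = #(A ∪ S) + #(A ∩ S) := by
      exact_mod_cast (card_union_add_card_inter A S).symm
    linarith
  calc (#S - t / 2 : ℝ) * m ^ 2 ≤ #(A ∩ S) * m ^ 2 := by gcongr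
    _ = ∑ _j ∈ A ∩ S, m ^ 2 := by rw [sum_const, nsmul_eq_mul]
    _ ≤ ∑ j ∈ A ∩ S, v j ^ 2 := sum_le_sum fun j hj => hAm j (mem_inter.1 hj).1
    _ ≤ ∑ j ∈ S, v j ^ 2 :=
      sum_le_sum_of_subset_of_nonneg inter_subset_right fun j _ _ => sq_nonneg _

end IsMedian

section ComponentwiseMedian

variable {ι : Type*} [Fintype ι] {t : ℕ} {v : Fin t → EuclideanSpace ℝ ι}
  {m : EuclideanSpace ℝ ι}

theorem sub_half_mul_norm_sq_le_sum_norm_sq_of_isMedian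
    (h : ∀ r, IsMedian (fun j => v j r) (m r)) (S : Finset (Fin t)) :
    (#S - t / 2 : ℝ) * ‖m‖ ^ 2 ≤ ∑ j ∈ S, ‖v j‖ ^ 2 := by
  simp only [EuclideanSpace.real_norm_sq_eq, mul_sum]
  rw [sum_comm]
  exact sum_le_sum fun r _ => (h r).sub_half_mul_sq_le_sum_sq S

theorem third_le_card_lt_norm_of_isMedian (h : ∀ r, IsMedian (fun j => v j r) (m r)) {B : ℝ}
    (hB : 0 ≤ B) (hm : 2 * B < ‖m‖) :
    (t : ℝ) / 3 ≤ #{j | B < ‖v j‖} := by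
  set S : Finset (Fin t) := {j | ‖v j‖ ≤ B}
  have hsplit : (#S + #{j | B < ‖v j‖} : ℝ) = t := by
    have := card_filter_add_card_filter_not (s := univ) (fun j => ‖v j‖ ≤ B)
    simp only [not_le, card_univ, Fintype.card_fin] at this
    exact_mod_cast this
  have hS : (#S - t / 2 : ℝ) * ‖m‖ ^ 2 ≤ #S * B ^ 2 :=
    calc (#S - t / 2 : ℝ) * ‖m‖ ^ 2 ≤ ∑ j ∈ S, ‖v j‖ ^ 2 :=
          sub_half_mul_norm_sq_le_sum_norm_sq_of_isMedian h S
      _ ≤ ∑ _j ∈ S, B ^ 2 := sum_le_sum fun j hj => by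
          have := (mem_filter.1 hj).2
          gcongr
      _ = #S * B ^ 2 := by rw [sum_const, nsmul_eq_mul]
  by_contra! hlt
  have hm2 : 4 * B ^ 2 < ‖m‖ ^ 2 := by nlinarith
  have hS0 : (0 : ℝ) < #S := by linarith [Nat.cast_nonneg (α := ℝ) #{j | B < ‖v j‖}]
  nlinarith

end ComponentwiseMedian

section Hoeffding

open ProbabilityTheory Real

variable {Ω β ι : Type*} [Fintype ι] {mΩ : MeasurableSpace Ω} {mβ : MeasurableSpace β}
  {μ : Measure Ω} [IsProbabilityMeasure μ]

open scoped Classical in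
theorem measureReal_card_mem_ge_le_exp {X : ι → Ω → β} (hX : ∀ i, Measurable (X i))
    (hindep : iIndepFun X μ) {S : Set β} (hS : MeasurableSet S) {p ε : ℝ}
    (hp : ∀ i, μ.real (X i ⁻¹' S) ≤ p) (hε : 0 ≤ ε) :
    μ.real {ω | (p + ε) * (Fintype.card ι : ℝ) ≤ #{i | X i ω ∈ S}}
      ≤ exp (-2 * ε ^ 2 * Fintype.card ι) := by
  set n : ℝ := (Fintype.card ι : ℝ)
  set Z : ι → Ω → ℝ := fun i => (X i ⁻¹' S).indicator 1
  have hZ_comp : ∀ i, Z i = S.indicator 1 ∘ X i := fun i => by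
    ext ω; simp [Z, Set.indicator_apply]
  have hZ_sum : ∀ ω, ∑ i, Z i ω = #{i | X i ω ∈ S} := fun ω => by
    simp [Z, Set.indicator_apply, sum_boole]
  have hZ_mean : ∀ i, μ[Z i] = μ.real (X i ⁻¹' S) := fun i =>
    integral_indicator_one (hX i hS)
  -- Hoeffding's lemma: a centred variable with values in `[0, 1]` is `1/4`-sub-Gaussian.
  have hsubG : ∀ i ∈ (univ : Finset ι),
      HasSubgaussianMGF (fun ω => Z i ω - μ[Z i]) ((‖(1 : ℝ) - 0‖₊ / 2) ^ 2) μ := by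
    intro i _
    refine hasSubgaussianMGF_of_mem_Icc ?_ (ae_of_all _ fun ω => ?_)
    · rw [hZ_comp]; exact ((measurable_one.indicator hS).comp (hX i)).aemeasurable
    · by_cases h : X i ω ∈ S <;> simp [Z, h]
  have hindep_centred : iIndepFun (fun i ω => Z i ω - μ[Z i]) μ := by
    have := hindep.comp (fun i x => S.indicator 1 x - μ[Z i])
      (fun i => (measurable_one.indicator hS).sub_const _)
    convert this using 2 with i
    rw [hZ_comp]; rfl
  have hsub : {ω | (p + ε) * n ≤ #{i | X i ω ∈ S}}
      ⊆ {ω | ε * n ≤ ∑ i, (Z i ω - μ[Z i])} := by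
    intro ω hω
    have hmean : ∑ i, μ[Z i] ≤ p * n := by
      simpa [hZ_mean, n, mul_comm] using sum_le_sum fun i (_ : i ∈ univ) => hp i
    simp only [Set.mem_ofPred_eq, sum_sub_distrib, hZ_sum] at hω ⊢
    linarith
  refine (measureReal_mono hsub).trans
    ((HasSubgaussianMGF.measure_sum_ge_le_of_iIndepFun hindep_centred hsubG
      (by positivity)).trans_eq ?_)
  congr 1
  rcases eq_or_ne (Fintype.card ι : ℝ) 0 with hn | hn
  · simp [n, hn]
  · simp [n]
    field_simp

end Hoeffding

/-- **Concentration of the componentwise median of i.i.d. random vectors.**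
There is an absolute constant `c > 0` such that for i.i.d. random vectors
`g 1, …, g t` in `ℝ^k` with `Pr{‖g j‖ ≤ B} ≥ 4/5`, any componentwise median `ḡ`
satisfies `Pr{‖ḡ‖ > 2B} ≤ exp(−c t)`. -/
theorem median_concentration :
    ∃ c : ℝ, 0 < c ∧
      ∀ (Θ : Type) (mΘ : MeasurableSpace Θ) (μ : Measure Θ),
        IsProbabilityMeasure μ →
      ∀ (k t : ℕ) (g : Fin t → Θ → EuclideanSpace ℝ (Fin k)),
        (∀ j, Measurable (g j)) →
        ProbabilityTheory.iIndepFun g μ →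
        (∀ j j' : Fin t, Measure.map (g j) μ = Measure.map (g j') μ) →
      ∀ B : ℝ, 0 ≤ B →
        (∀ j : Fin t, ENNReal.ofReal (4/5) ≤ μ {θ | ‖g j θ‖ ≤ B}) →
      ∀ gbar : Θ → EuclideanSpace ℝ (Fin k),
        (∀ θ (r : Fin k), IsMedian (fun j => g j θ r) (gbar θ r)) →
        μ {θ | 2 * B < ‖gbar θ‖} ≤ ENNReal.ofReal (Real.exp (-(c * t))) := by
  refine ⟨8 / 225, by norm_num, ?_⟩
  intro Θ _ μ _ k t g hg hindep _ B hB hgood gbar hmedian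
  have hS : MeasurableSet {x : EuclideanSpace ℝ (Fin k) | B < ‖x‖} :=
    measurableSet_lt measurable_const measurable_norm
  have hbad : ∀ j, μ.real (g j ⁻¹' {x | B < ‖x‖}) ≤ 1 / 5 := fun j => by
    have hmeas : MeasurableSet {θ | ‖g j θ‖ ≤ B} := measurableSet_le (hg j).norm measurable_const
    have : 4 / 5 ≤ μ.real {θ | ‖g j θ‖ ≤ B} :=
      (ENNReal.ofReal_le_iff_le_toReal (measure_ne_top _ _)).1 (hgood j)
    have hcompl : g j ⁻¹' {x | B < ‖x‖} = {θ | ‖g j θ‖ ≤ B}ᶜ := by ext; simp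
    rw [hcompl, measureReal_compl hmeas, probReal_univ]
    linarith
  have hhoeffding := measureReal_card_mem_ge_le_exp hg hindep hS hbad (ε := 2 / 15) (by norm_num)
  simp only [Fintype.card_fin] at hhoeffding
  have hsub : {θ | 2 * B < ‖gbar θ‖}
      ⊆ {θ | (1 / 5 + 2 / 15) * (t : ℝ) ≤ #{j | g j θ ∈ {x | B < ‖x‖}}} := fun θ hθ => by
    have := third_le_card_lt_norm_of_isMedian (hmedian θ) hB hθ
    simp only [Set.mem_ofPred_eq] at this ⊢
    convert this using 1
    ring
  calc μ {θ | 2 * B < ‖gbar θ‖} ≤ _ := measure_mono hsub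
    _ = ENNReal.ofReal (μ.real _) := (ofReal_measureReal (measure_ne_top _ _)).symm
    _ ≤ ENNReal.ofReal (Real.exp (-(8 / 225 * t))) := by
      refine ENNReal.ofReal_le_ofReal (hhoeffding.trans_eq ?_)
      ring_nf
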